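/- An optimal solution to the ensemble post-processing problem exists that is an extreme point of the feasible polytope; in particular, there exists an optimal equalized-odds derived predictor whose parameter vector $(p_{\bar{y}a})$ has at most $2$ coordinates strictly between $0$ and $1$ (all other coordinates being $0$ or $1$), since the polytope in $[0,1]^{2^{S+1}}$ is cut out by only $2$ additional linear equality constraints. -/

import Mathlib

/-!
A linear functional on a nonempty compact convex set attains its minimum at an extreme point:
the minimizers form an exposed face, which has an extreme point by Krein–Milman. At an extreme
point `p` of `{x ∈ [0,1]^E | C x = b}`, if more coordinates of `p` were fractional than `C` has
rows, some nonzero `v` supported on them would lie in the kernel of `C`, and `p ± t v` would stay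
in the polytope for small `t > 0`, contradicting extremality. The post-processing problem is such
a linear program: two constraint rows (one per value of `Y`) and an objective that is affine in
the parameters.
-/

open Finset
open scoped Classical

/-- Probability of an event under a pmf `P` on a finite sample space. -/
noncomputable def pr {Ω : Type} [Fintype Ω] (P : Ω → ℝ) (E : Ω → Prop) : ℝ :=
  ∑ ω, if E ω then P ω else 0

/-- Conditional probability `Pr(E | F)`. -/
noncomputable def cpr {Ω : Type} [Fintype Ω] (P : Ω → ℝ) (E F : Ω → Prop) : ℝ :=
  pr P (fun ω => E ω ∧ F ω) / pr P F

open Matrix Topology Filter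

section ExtremeMinimizer

variable {V : Type*} [AddCommGroup V] [Module ℝ V] [TopologicalSpace V] [T2Space V]
  [IsTopologicalAddGroup V] [ContinuousSMul ℝ V] [LocallyConvexSpace ℝ V] {s : Set V}

theorem IsCompact.exists_mem_extremePoints_isMinOn (hs : IsCompact s) (hne : s.Nonempty)
    (l : StrongDual ℝ V) : ∃ x ∈ s.extremePoints ℝ, IsMinOn l s x := by
  have hexp : IsExposed ℝ s ((-l).toExposed s) := ContinuousLinearMap.toExposed.isExposed
  obtain ⟨y, hys, hy⟩ := hs.exists_isMinOn hne l.continuous.continuousOn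
  obtain ⟨x, hx⟩ := (hexp.isCompact hs).extremePoints_nonempty
    ⟨y, hys, fun z hz => neg_le_neg (hy hz)⟩
  exact ⟨x, hexp.isExtreme.extremePoints_subset_extremePoints hx,
    fun z hz => neg_le_neg_iff.1 (hx.1.2 z hz)⟩

end ExtremeMinimizer

theorem Matrix.exists_ne_zero_mulVec_eq_zero_of_card_lt {𝕜 ι E : Type*} [Field 𝕜] [Fintype ι]
    [Fintype E] (C : Matrix ι E 𝕜) (K : Finset E) (hK : Fintype.card ι < #K) :
    ∃ v ≠ 0, (∀ z ∉ K, v z = 0) ∧ C *ᵥ v = 0 := by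
  let extendByZero := Function.ExtendByZero.linearMap 𝕜 ((↑) : K → E)
  have hker : LinearMap.ker (C.mulVecLin ∘ₗ extendByZero) ≠ ⊥ :=
    LinearMap.ker_ne_bot_of_finrank_lt (by simpa using hK)
  obtain ⟨u, hu, hu0⟩ := (Submodule.ne_bot_iff _).1 hker
  refine ⟨extendByZero u, ?_, fun z hz => ?_, hu⟩
  · rw [← extendByZero.map_zero]
    exact (Function.extend_injective Subtype.val_injective (0 : E → 𝕜)).ne hu0
  · exact Function.extend_apply' u (0 : E → 𝕜) z fun ⟨w, hw⟩ => hz (hw ▸ w.2)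

section BoxPolytope

variable {ι E : Type*} [Fintype E]

noncomputable def boxPolytope (C : Matrix ι E ℝ) (b : ι → ℝ) : Set (E → ℝ) :=
  {p ∈ Set.Icc 0 1 | C *ᵥ p = b}

noncomputable def fractionalCoords (p : E → ℝ) : Finset E :=
  univ.filter fun z => p z ≠ 0 ∧ p z ≠ 1

theorem isCompact_boxPolytope (C : Matrix ι E ℝ) (b : ι → ℝ) :
    IsCompact (boxPolytope C b) :=
  isCompact_Icc.inter_right <| isClosed_eq (continuous_const.matrix_mulVec continuous_id)
    continuous_const

theorem eventually_add_smul_mem_Icc {p v : E → ℝ} (hp : p ∈ Set.Icc 0 1)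
    (hv : ∀ z ∉ fractionalCoords p, v z = 0) : ∀ᶠ t in 𝓝 (0 : ℝ), p + t • v ∈ Set.Icc 0 1 := by
  have hcoord : ∀ z, ∀ᶠ t in 𝓝 (0 : ℝ), p z + t * v z ∈ Set.Icc (0 : ℝ) 1 := by
    intro z
    by_cases hz : z ∈ fractionalCoords p
    · simp only [fractionalCoords, mem_filter, mem_univ, true_and] at hz
      have hIoo : p z ∈ Set.Ioo (0 : ℝ) 1 :=
        ⟨(hp.1 z).lt_of_ne' hz.1, (hp.2 z).lt_of_ne hz.2⟩
      have hlim : Tendsto (fun t : ℝ => p z + t * v z) (𝓝 0) (𝓝 (p z)) := by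
        simpa using ((continuous_mul_const (v z)).const_add (p z)).tendsto (0 : ℝ)
      exact (hlim.eventually (isOpen_Ioo.mem_nhds hIoo)).mono fun t ht =>
        Set.Ioo_subset_Icc_self ht
    · simpa [hv z hz] using ⟨hp.1 z, hp.2 z⟩
  filter_upwards [Filter.eventually_all.2 hcoord] with t ht
  exact ⟨fun z => (ht z).1, fun z => (ht z).2⟩

theorem card_fractionalCoords_le_of_mem_extremePoints [Fintype ι] {C : Matrix ι E ℝ} {b : ι → ℝ}
    {p : E → ℝ} (hp : p ∈ (boxPolytope C b).extremePoints ℝ) :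
    #(fractionalCoords p) ≤ Fintype.card ι := by
  by_contra! hcard
  obtain ⟨v, hv0, hvK, hCv⟩ := C.exists_ne_zero_mulVec_eq_zero_of_card_lt _ hcard
  obtain ⟨hp_box, hCp⟩ := hp.1
  have hmem : ∀ u, C *ᵥ u = 0 → p + u ∈ Set.Icc 0 1 → p + u ∈ boxPolytope C b :=
    fun u hu hbox => ⟨hbox, by rw [mulVec_add, hu, add_zero, hCp]⟩
  obtain ⟨t, ⟨hplus, hminus⟩, ht⟩ :=
    ((((eventually_add_smul_mem_Icc hp_box hvK).and
      (eventually_add_smul_mem_Icc (v := -v) hp_box (by simpa using hvK))).filter_mono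
        nhdsWithin_le_nhds).and (self_mem_nhdsWithin (s := Set.Ioi 0))).exists
  have hseg : p ∈ openSegment ℝ (p + t • v) (p + t • -v) :=
    ⟨1 / 2, 1 / 2, by norm_num, by norm_num, by norm_num, by ext; simp; ring⟩
  have hfix := (mem_extremePoints.1 hp).2 _ (hmem _ (by simp [mulVec_smul, hCv]) hplus) _
    (hmem _ (by simp [mulVec_smul, mulVec_neg, hCv]) hminus) hseg
  have htv : t • v = 0 := by simpa using hfix.1
  exact hv0 ((smul_eq_zero.1 htv).resolve_left (ne_of_gt ht))

theorem exists_isMinOn_boxPolytope_card_fractionalCoords_le [Fintype ι] (C : Matrix ι E ℝ)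
    (b : ι → ℝ) (hne : (boxPolytope C b).Nonempty) (l : StrongDual ℝ (E → ℝ)) :
    ∃ p ∈ boxPolytope C b, IsMinOn l (boxPolytope C b) p ∧
      #(fractionalCoords p) ≤ Fintype.card ι := by
  obtain ⟨p, hp, hmin⟩ := (isCompact_boxPolytope C b).exists_mem_extremePoints_isMinOn hne l
  exact ⟨p, hp.1, hmin, card_fractionalCoords_le_of_mem_extremePoints hp⟩

end BoxPolytope

theorem optimal_vertex_few_fractional_general {Ω : Type} [Fintype Ω] (P : Ω → ℝ)
    (S : ℕ) (Yhat : Fin S → Ω → Bool) (A Y : Ω → Bool)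
    (F : Set ((Fin S → Bool) → Bool → ℝ))
    (hF : F = {p | (∀ (yb : Fin S → Bool) (a : Bool), 0 ≤ p yb a ∧ p yb a ≤ 1) ∧
      ∀ y : Bool,
        (∑ yb : Fin S → Bool,
          cpr P (fun ω => ∀ i, Yhat i ω = yb i) (fun ω => Y ω = y ∧ A ω = false) *
            p yb false) =
        (∑ yb : Fin S → Bool,
          cpr P (fun ω => ∀ i, Yhat i ω = yb i) (fun ω => Y ω = y ∧ A ω = true) *
            p yb true)})
    (L : ((Fin S → Bool) → Bool → ℝ) → ℝ)
    (hL : L = fun p => ∑ yb : Fin S → Bool, ∑ a : Bool,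
      (p yb a * pr P (fun ω => (∀ i, Yhat i ω = yb i) ∧ A ω = a ∧ Y ω = false)
        + (1 - p yb a) *
          pr P (fun ω => (∀ i, Yhat i ω = yb i) ∧ A ω = a ∧ Y ω = true))) :
    ∃ p ∈ F, (∀ q ∈ F, L p ≤ L q) ∧
      ((Finset.univ : Finset ((Fin S → Bool) × Bool)).filter
        (fun z => p z.1 z.2 ≠ 0 ∧ p z.1 z.2 ≠ 1)).card ≤ 2 := by
  let prob (z : (Fin S → Bool) × Bool) (y : Bool) : ℝ :=
    pr P fun ω => (∀ i, Yhat i ω = z.1 i) ∧ A ω = z.2 ∧ Y ω = y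
  let C : Matrix Bool ((Fin S → Bool) × Bool) ℝ := fun y z =>
    (if z.2 then -1 else 1) *
      cpr P (fun ω => ∀ i, Yhat i ω = z.1 i) (fun ω => Y ω = y ∧ A ω = z.2)
  let w : (Fin S → Bool) × Bool → ℝ := fun z => prob z false - prob z true
  have hF_iff : ∀ p, p ∈ F ↔ Function.uncurry p ∈ boxPolytope C 0 := by
    intro p
    simp only [hF, boxPolytope, Set.mem_ofPred_eq, Set.mem_Icc, Pi.le_def, funext_iff,
      Prod.forall, Function.uncurry_apply_pair, Pi.zero_apply, Pi.one_apply, mulVec, dotProduct,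
      Fintype.sum_prod_type, Fintype.sum_bool, C, if_true, Bool.false_eq_true, if_false,
      one_mul, neg_mul, Finset.sum_add_distrib, Finset.sum_neg_distrib, neg_add_eq_zero, forall_and]
    exact and_congr Iff.rfl (forall_congr' fun _ => eq_comm)
  have hL_affine : ∀ p, L p = ∑ z, prob z true + w ⬝ᵥ Function.uncurry p := by
    intro p
    simp only [hL, dotProduct, Fintype.sum_prod_type, Fintype.sum_bool, ← Finset.sum_add_distrib,
      Function.uncurry_apply_pair, w, prob]
    refine Finset.sum_congr rfl fun yb _ => ?_
    ring
  obtain ⟨p, hp, hmin, hcard⟩ := exists_isMinOn_boxPolytope_card_fractionalCoords_le C 0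
    ⟨0, by simp [boxPolytope]⟩ (dotProductBilin ℝ ℝ w).toContinuousLinearMap
  refine ⟨Function.curry p, (hF_iff _).2 hp, fun q hq => ?_, hcard⟩
  have hle := hmin ((hF_iff q).1 hq)
  simp only [Set.mem_ofPred_eq, LinearMap.coe_toContinuousLinearMap',
    dotProductBilin_apply_apply] at hle
  rw [hL_affine, hL_affine, Function.uncurry_curry]
  linarith

/-- The ensemble post-processing LP admits an optimal solution at an extreme
point of the feasible polytope; in particular there is an optimal equalized-odds parameter
vector with at most 2 coordinates strictly between 0 and 1. -/
theorem optimal_vertex_few_fractional {Ω : Type} [Fintype Ω] (P : Ω → ℝ)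
    (hP0 : ∀ ω, 0 ≤ P ω) (hP1 : ∑ ω, P ω = 1)
    (S : ℕ) (Yhat : Fin S → Ω → Bool) (A Y : Ω → Bool)
    (hpos : ∀ a y : Bool, 0 < pr P (fun ω => A ω = a ∧ Y ω = y))
    (F : Set ((Fin S → Bool) → Bool → ℝ))
    (hF : F = {p | (∀ (yb : Fin S → Bool) (a : Bool), 0 ≤ p yb a ∧ p yb a ≤ 1) ∧
      ∀ y : Bool,
        (∑ yb : Fin S → Bool,
          cpr P (fun ω => ∀ i, Yhat i ω = yb i) (fun ω => Y ω = y ∧ A ω = false) *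
            p yb false) =
        (∑ yb : Fin S → Bool,
          cpr P (fun ω => ∀ i, Yhat i ω = yb i) (fun ω => Y ω = y ∧ A ω = true) *
            p yb true)})
    (L : ((Fin S → Bool) → Bool → ℝ) → ℝ)
    (hL : L = fun p => ∑ yb : Fin S → Bool, ∑ a : Bool,
      (p yb a * pr P (fun ω => (∀ i, Yhat i ω = yb i) ∧ A ω = a ∧ Y ω = false)
        + (1 - p yb a) *
          pr P (fun ω => (∀ i, Yhat i ω = yb i) ∧ A ω = a ∧ Y ω = true))) :
    ∃ p ∈ F, (∀ q ∈ F, L p ≤ L q) ∧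
      ((Finset.univ : Finset ((Fin S → Bool) × Bool)).filter
        (fun z => p z.1 z.2 ≠ 0 ∧ p z.1 z.2 ≠ 1)).card ≤ 2 :=
  optimal_vertex_few_fractional_general P S Yhat A Y F hF L hL
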